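/- arXiv:2510.17859 — 2 statements merged into one kernel-verified Lean document; each statement's English description precedes it below -/
import Mathlib

section
/- Monotone comparison principle for the embedded system implies soundness of interval over-approximation: suppose g : ℝⁿ × ℝⁿ → ℝⁿ satisfies g(x, x) = f(x), and suppose the embedded flow Φ_h of h(x, x̂) = (g(x, x̂), g(x̂, x)) preserves the southeast order (x ≤ x', x̂' ≤ x̂ implies the first components of Φ_h satisfy the same order relation and similarly inverted for second components). Then for any initial condition u with x̲₀ ≤ u ≤ x̄₀ componentwise, the solution x(t) of ẋ = f(x), x(0) = u, satisfies α(t) ≤ x(t) ≤ β(t) for all t ≥ 0, where (α, β) solves the embedded system with (α(0), β(0)) = (x̲₀, x̄₀). -/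
/-!
The diagonal curve `t ↦ (x t, x t)` solves the embedded system, because `g x x = f x`. The
embedded vector field is Lipschitz, so by uniqueness of solutions this curve is the embedded flow
started at `(u, u)`. Since `(xlo, xhi) ≤_SE (u, u)`, monotonicity of the flow gives the bounds.
-/

open Set Function

theorem eqOn_Ici_of_hasDerivAt_of_lipschitzWith {E : Type*} [NormedAddCommGroup E]
    [NormedSpace ℝ E] {v : E → E} {K : NNReal} (hv : LipschitzWith K v) {γ₁ γ₂ : ℝ → E}
    {t₀ : ℝ} (h₁ : ∀ t, t₀ ≤ t → HasDerivAt γ₁ (v (γ₁ t)) t)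
    (h₂ : ∀ t, t₀ ≤ t → HasDerivAt γ₂ (v (γ₂ t)) t) (h₀ : γ₁ t₀ = γ₂ t₀) :
    EqOn γ₁ γ₂ (Ici t₀) := by
  intro t ht
  have hcont {γ : ℝ → E} (h : ∀ t, t₀ ≤ t → HasDerivAt γ (v (γ t)) t) :
      ContinuousOn γ (Icc t₀ t) :=
    fun s hs => (h s hs.1).continuousAt.continuousWithinAt
  exact ODE_solution_unique (v := fun _ => v) (fun _ => hv)
    (hcont h₁) (fun s hs => (h₁ s hs.1).hasDerivWithinAt)
    (hcont h₂) (fun s hs => (h₂ s hs.1).hasDerivWithinAt) h₀ ⟨ht, le_rfl⟩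

def embeddedField {α β : Type*} (g : α → α → β) (p : α × α) : β × β :=
  (g p.1 p.2, g p.2 p.1)

theorem LipschitzWith.embeddedField {α β : Type*} [PseudoEMetricSpace α] [PseudoEMetricSpace β]
    {g : α → α → β} {K : NNReal} (hg : LipschitzWith K (uncurry g)) :
    LipschitzWith K (embeddedField g) := by
  have hswap : LipschitzWith 1 (Prod.swap : α × α → α × α) :=
    LipschitzWith.of_edist_le fun p q => by simp [Prod.edist_eq, max_comm]
  have h := hg.prodMk (hg.comp hswap)
  rwa [mul_one, max_self] at h

theorem HasDerivAt.diag_embeddedField {E : Type*} [NormedAddCommGroup E] [NormedSpace ℝ E]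
    {f : E → E} {g : E → E → E} (hdiag : ∀ x, g x x = f x) {x : ℝ → E} {t : ℝ}
    (hx : HasDerivAt x (f (x t)) t) :
    HasDerivAt (fun s => (x s, x s)) (embeddedField g (x t, x t)) t := by
  simpa only [embeddedField, hdiag] using hx.prodMk hx

/-- Monotone comparison principle for the embedded mixed-monotone system. -/
theorem embedded_flow_interval_sound (n : ℕ)
    (f : (Fin n → ℝ) → (Fin n → ℝ)) (g : (Fin n → ℝ) → (Fin n → ℝ) → (Fin n → ℝ))
    (K : NNReal) (hg : LipschitzWith K (fun p : (Fin n → ℝ) × (Fin n → ℝ) => g p.1 p.2))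
    (hdiag : ∀ x, g x x = f x)
    (Φ : ℝ → (Fin n → ℝ) × (Fin n → ℝ) → (Fin n → ℝ) × (Fin n → ℝ))
    (hΦ0 : ∀ p, Φ 0 p = p)
    (hΦode : ∀ p, ∀ t : ℝ, 0 ≤ t →
      HasDerivAt (fun s => Φ s p) (g (Φ t p).1 (Φ t p).2, g (Φ t p).2 (Φ t p).1) t)
    (hmono : ∀ t : ℝ, 0 ≤ t → ∀ p q : (Fin n → ℝ) × (Fin n → ℝ),
      p.1 ≤ q.1 → q.2 ≤ p.2 → (Φ t p).1 ≤ (Φ t q).1 ∧ (Φ t q).2 ≤ (Φ t p).2)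
    (xlo xhi u : Fin n → ℝ) (hu : xlo ≤ u ∧ u ≤ xhi)
    (x : ℝ → (Fin n → ℝ)) (hx0 : x 0 = u)
    (hxode : ∀ t : ℝ, 0 ≤ t → HasDerivAt x (f (x t)) t) :
    ∀ t : ℝ, 0 ≤ t →
      (Φ t (xlo, xhi)).1 ≤ x t ∧ x t ≤ (Φ t (xlo, xhi)).2 := by
  intro t ht
  have hflow_diag : Φ t (u, u) = (x t, x t) :=
    eqOn_Ici_of_hasDerivAt_of_lipschitzWith (LipschitzWith.embeddedField hg)
      (fun s hs => hΦode (u, u) s hs) (fun s hs => (hxode s hs).diag_embeddedField hdiag)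
      (by rw [hΦ0, hx0]) ht
  simpa only [hflow_diag] using hmono t ht (xlo, xhi) (u, u) hu.1 hu.2
end

section
/- Soundness of the sampled-data mixed monotonicity bound for sign-stable sensitivity: let Φ : ℝⁿ → ℝⁿ be continuously differentiable and suppose there is a sign pattern σ : Fin n × Fin n → {±1} such that σ(i,j) · ∂Φ_i/∂u_j(u) ≥ 0 for all u in the box [u̲, ū]. Define g_i(x, x̂) = Φ_i(ξ_i) where ξ_i^j = x_j if σ(i,j) = +1 and ξ_i^j = x̂_j otherwise. Then for every u ∈ [u̲, ū] (componentwise), g(u̲, ū) ≤ Φ(u) ≤ g(ū, u̲) componentwise. -/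
/-!
Fix an output coordinate `i`. Along the `j`-th coordinate line through a point of the box,
`t ↦ σ i j * Φ (update v j t) i` has nonnegative derivative, so moving a single coordinate
towards `uhi j` (if `σ i j = 1`) or towards `ulo j` (if `σ i j = -1`) can only increase `Φ · i`.
The corner `g(ū, u̲)` is reached from `u` by such moves, one coordinate at a time, without
leaving the box; symmetrically `u` is reached from `g(u̲, ū)`.
-/

open Set Function

theorem le_of_forall_update_le_of_mem_pi {ι : Type*} [Fintype ι] [DecidableEq ι]
    {α : ι → Type*} {β : Type*} [Preorder β] {f : (∀ j, α j) → β}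
    {S : ∀ j, Set (α j)} {x y : ∀ j, α j} (hx : x ∈ univ.pi S) (hy : y ∈ univ.pi S)
    (h : ∀ j, ∀ v ∈ univ.pi S, f (update v j (x j)) ≤ f (update v j (y j))) :
    f x ≤ f y := by
  suffices ∀ s : Finset ι, f x ≤ f (s.piecewise y x) by
    simpa using this Finset.univ
  intro s
  induction s using Finset.induction_on with
  | empty => simp
  | insert a s ha ih =>
    have hmem : s.piecewise y x ∈ univ.pi S := s.piecewise_mem_set_pi hy hx
    calc f x ≤ f (s.piecewise y x) := ih
      _ = f (update (s.piecewise y x) a (x a)) := by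
        rw [← Finset.piecewise_eq_of_notMem s y x ha, update_eq_self]
      _ ≤ f ((insert a s).piecewise y x) := by
        rw [Finset.piecewise_insert]; exact h a _ hmem

theorem monotoneOn_const_mul_comp_update {ι : Type*} [Fintype ι] [DecidableEq ι]
    {S : ι → Set ℝ} {f : (ι → ℝ) → ℝ} {f' : (ι → ℝ) → (ι → ℝ) →L[ℝ] ℝ} {j : ι}
    {c : ℝ} (hS : Convex ℝ (S j)) (hf : ∀ x ∈ univ.pi S, HasFDerivAt f (f' x) x)
    (hc : ∀ x ∈ univ.pi S, 0 ≤ c * f' x (Pi.single j 1)) {v : ι → ℝ}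
    (hv : v ∈ univ.pi S) :
    MonotoneOn (fun t => c * f (update v j t)) (S j) := by
  have hmem : ∀ t ∈ S j, update v j t ∈ univ.pi S := fun t ht =>
    (update_mem_pi_iff_of_mem hv).2 fun _ => ht
  have hderiv : ∀ t ∈ S j, HasDerivAt (fun t => c * f (update v j t))
      (c * f' (update v j t) (Pi.single j 1)) t := fun t ht =>
    ((hf _ (hmem t ht)).comp_hasDerivAt t (hasDerivAt_update v j t)).const_mul c
  exact monotoneOn_of_hasDerivWithinAt_nonneg hS
    (fun t ht => (hderiv t ht).continuousAt.continuousWithinAt)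
    (fun t ht => (hderiv t (interior_subset ht)).hasDerivWithinAt)
    (fun t ht => hc _ (hmem t (interior_subset ht)))

theorem le_of_monotoneOn_sign_mul {g : ℝ → ℝ} {s : Set ℝ} {c x y : ℝ}
    (hc : c = 1 ∨ c = -1) (hg : MonotoneOn (fun t => c * g t) s) (hx : x ∈ s) (hy : y ∈ s)
    (hxy : if c = 1 then x ≤ y else y ≤ x) : g x ≤ g y := by
  rcases hc with rfl | rfl
  · simpa using hg hx hy (by simpa using hxy)
  · have := hg hy hx (by norm_num at hxy; exact hxy)
    linarith

/-- Soundness of the sampled-data mixed monotonicity bound under sign-stable sensitivity. -/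
theorem sampled_data_mm_sound (n : ℕ) (Φ : (Fin n → ℝ) → (Fin n → ℝ))
    (ulo uhi : Fin n → ℝ) (hbox : ulo ≤ uhi)
    (U : Set (Fin n → ℝ)) (hU : IsOpen U) (hsub : Set.Icc ulo uhi ⊆ U)
    (hΦ : ContDiffOn ℝ 1 Φ U)
    (σ : Fin n → Fin n → ℝ) (hσ : ∀ i j, σ i j = 1 ∨ σ i j = -1)
    (hsign : ∀ u ∈ Set.Icc ulo uhi, ∀ i j,
      0 ≤ σ i j * fderiv ℝ Φ u (Pi.single j 1) i) :
    ∀ u ∈ Set.Icc ulo uhi, ∀ i,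
      Φ (fun j => if σ i j = 1 then ulo j else uhi j) i ≤ Φ u i
        ∧ Φ u i ≤ Φ (fun j => if σ i j = 1 then uhi j else ulo j) i := by
  intro u hu i
  set B : Set (Fin n → ℝ) := univ.pi fun j => Icc (ulo j) (uhi j)
  rw [← pi_univ_Icc] at hsub hsign hu
  have hderiv : ∀ x ∈ B, HasFDerivAt (fun x => Φ x i)
      ((ContinuousLinearMap.proj i).comp (fderiv ℝ Φ x)) x := fun x hx =>
    hasFDerivAt_pi'.1
      ((hΦ.differentiableOn one_ne_zero).differentiableAt (hU.mem_nhds (hsub hx))).hasFDerivAt i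
  have hle : ∀ x ∈ B, ∀ y ∈ B,
      (∀ j, if σ i j = 1 then x j ≤ y j else y j ≤ x j) → Φ x i ≤ Φ y i :=
    fun x hx y hy hxy => le_of_forall_update_le_of_mem_pi (f := fun x => Φ x i) hx hy
      fun j v hv => le_of_monotoneOn_sign_mul (hσ i j)
        (monotoneOn_const_mul_comp_update (S := fun j => Icc (ulo j) (uhi j)) (convex_Icc _ _)
          hderiv (fun w hw => hsign w hw i j) hv)
        (hx j trivial) (hy j trivial) (hxy j)
  refine ⟨hle _ (fun j _ => ?_) u hu fun j => ?_, hle u hu _ (fun j _ => ?_) fun j => ?_⟩ <;>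
    split_ifs <;> simp [hbox j, (hu j trivial).1, (hu j trivial).2]
end
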